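/- Consider the problem (EP₁): minimize Σᵢ(δᵢyᵢ + eᵢxᵢ) + Σⱼ ζⱼzⱼ + c₀ over x, y ∈ ℝ^l, z ∈ ℝ^k subject to Σᵢ(αᵢyᵢ + bᵢxᵢ) + Σⱼ zⱼ + c = 0 and ½xᵢ² ≤ yᵢ for all i. Suppose: (i) there exist (x,z) with Σᵢ(½αᵢxᵢ² + bᵢxᵢ) + Σⱼ zⱼ + c < 0 and (x',z') with Σᵢ(½αᵢx'ᵢ² + bᵢx'ᵢ) + Σⱼ z'ⱼ + c > 0; and (ii) k ≥ 1 or αᵢ ≠ 0 for some i. Then the infimum of (EP₁) equals sup over ν ∈ ℝ of cν + c₀ + Σᵢ hᵢ(ν) + g(ν) (as extended real numbers), where hᵢ(ν) = −(νbᵢ + eᵢ)²/(2(ναᵢ + δᵢ)) if ναᵢ + δᵢ > 0, hᵢ(ν) = 0 if ναᵢ + δᵢ = 0 and eᵢ + νbᵢ = 0, and hᵢ(ν) = −∞ otherwise; and g(ν) = 0 if ζⱼ + ν = 0 for all j = 1,…,k, and g(ν) = −∞ otherwise. -/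
import Mathlib


open scoped Classical

/-- The objective `f(x,u,w) = Σᵢ(½δᵢxᵢ² + eᵢxᵢ) + Σⱼ(ζⱼuⱼwⱼ + ½wⱼ² + ηⱼwⱼ)` of problem (P₁). -/
noncomputable def quadObj {l k : ℕ} (δ e : Fin l → ℝ) (ζ η : Fin k → ℝ)
    (x : Fin l → ℝ) (u w : Fin k → ℝ) : ℝ :=
  (∑ i, ((1/2) * δ i * x i ^ 2 + e i * x i)) +
    ∑ j, (ζ j * u j * w j + (1/2) * w j ^ 2 + η j * w j)

/-- The constraint function `h(x,u,w) = Σᵢ(½αᵢxᵢ² + bᵢxᵢ) + Σⱼ uⱼwⱼ + c` of problem (P₁). -/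
noncomputable def quadCon {l k : ℕ} (α b : Fin l → ℝ) (c : ℝ)
    (x : Fin l → ℝ) (u w : Fin k → ℝ) : ℝ :=
  (∑ i, ((1/2) * α i * x i ^ 2 + b i * x i)) + (∑ j, u j * w j) + c

/-- The SOCP objective `Σᵢ(δᵢyᵢ + eᵢxᵢ) + Σⱼ ζⱼzⱼ + c₀` of problem (P₂). -/
noncomputable def socpObj {l k : ℕ} (δ e : Fin l → ℝ) (ζ : Fin k → ℝ) (c₀ : ℝ)
    (x y : Fin l → ℝ) (z : Fin k → ℝ) : ℝ :=
  (∑ i, (δ i * y i + e i * x i)) + (∑ j, ζ j * z j) + c₀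

/-- The linear part `Σᵢ(αᵢyᵢ + bᵢxᵢ) + Σⱼ zⱼ` of the SOCP constraint in (P₂). -/
noncomputable def socpConLhs {l k : ℕ} (α b : Fin l → ℝ)
    (x y : Fin l → ℝ) (z : Fin k → ℝ) : ℝ :=
  (∑ i, (α i * y i + b i * x i)) + ∑ j, z j

/-- The optimal value (in the extended reals) of the equality-constrained SOCP problem (EP₁). -/
noncomputable def socpValEq {l k : ℕ} (δ e α b : Fin l → ℝ) (ζ : Fin k → ℝ) (c c₀ : ℝ) : EReal :=
  sInf {v : EReal | ∃ (x y : Fin l → ℝ) (z : Fin k → ℝ),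
    socpConLhs α b x y z + c = 0 ∧ (∀ i, (1/2) * x i ^ 2 ≤ y i) ∧
    v = (socpObj δ e ζ c₀ x y z : EReal)}

/-- The dual term `hᵢ(ν)` of Theorem 3.4 of Jiang–Li–Wu, with values in `ℝ ∪ {−∞}`. -/
noncomputable def hDual (αi δi bi ei ν : ℝ) : EReal :=
  if 0 < ν * αi + δi then ((-(ν * bi + ei) ^ 2 / (2 * (ν * αi + δi)) : ℝ) : EReal)
  else if ν * αi + δi = 0 ∧ ei + ν * bi = 0 then (0 : EReal)
  else ⊥

/-- The dual term `g(ν)` of Theorem 3.4 of Jiang–Li–Wu, with values in `ℝ ∪ {−∞}`. -/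
noncomputable def gDual {k : ℕ} (ζ : Fin k → ℝ) (ν : ℝ) : EReal :=
  if ∀ j, ζ j + ν = 0 then (0 : EReal) else ⊥


section Aux

noncomputable def Hre (αi δi bi ei ν : ℝ) : ℝ :=
  if 0 < ν * αi + δi then -(ν * bi + ei) ^ 2 / (2 * (ν * αi + δi)) else 0

def okCond (αi δi bi ei ν : ℝ) : Prop :=
  0 < ν * αi + δi ∨ (ν * αi + δi = 0 ∧ ei + ν * bi = 0)

lemma ereal_coe_sum {ι : Type*} (s : Finset ι) (f : ι → ℝ) :
    ((∑ i ∈ s, f i : ℝ) : EReal) = ∑ i ∈ s, ((f i : ℝ) : EReal) := by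
  induction s using Finset.cons_induction with
  | empty => simp
  | cons a s ha ih => rw [Finset.sum_cons, Finset.sum_cons, EReal.coe_add, ih]

lemma Hre_le {αi δi bi ei ν : ℝ} (hok : okCond αi δi bi ei ν) {x y : ℝ}
    (hxy : 1/2 * x^2 ≤ y) :
    Hre αi δi bi ei ν ≤ (δi + ν*αi) * y + (ei + ν*bi) * x := by
  unfold Hre
  rcases hok with h | ⟨h1, h2⟩
  · rw [if_pos h]
    rw [div_le_iff₀ (by positivity)]
    nlinarith [sq_nonneg ((ν*αi+δi)*x + (ν*bi+ei)),
      mul_nonneg (mul_pos h h).le (by linarith : (0:ℝ) ≤ y - 1/2*x^2)]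
  · rw [if_neg (by rw [h1]; exact lt_irrefl 0)]
    have e1 : δi + ν*αi = 0 := by linarith
    rw [e1, h2]; norm_num

lemma Hre_min {αi δi bi ei ν : ℝ} (hok : okCond αi δi bi ei ν) :
    ∃ x y : ℝ, 1/2 * x^2 ≤ y ∧ (δi + ν*αi) * y + (ei + ν*bi) * x = Hre αi δi bi ei ν := by
  unfold Hre
  rcases hok with h | ⟨h1, h2⟩
  · refine ⟨-(ν*bi+ei)/(ν*αi+δi), 1/2 * (-(ν*bi+ei)/(ν*αi+δi))^2, le_refl _, ?_⟩
    rw [if_pos h]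
    field_simp
    ring
  · refine ⟨0, 0, by norm_num, ?_⟩
    rw [if_neg (by rw [h1]; exact lt_irrefl 0)]
    have e1 : δi + ν*αi = 0 := by linarith
    rw [e1, h2]; ring

lemma hDual_eq_coe {αi δi bi ei ν : ℝ} (h : okCond αi δi bi ei ν) :
    hDual αi δi bi ei ν = ((Hre αi δi bi ei ν : ℝ) : EReal) := by
  unfold hDual Hre
  split_ifs with h1 h2
  · rfl
  · norm_num
  · rcases h with h | h
    · exact absurd h h1
    · exact absurd h h2

lemma hDual_bot {αi δi bi ei ν : ℝ} (h : ¬ okCond αi δi bi ei ν) :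
    hDual αi δi bi ei ν = ⊥ := by
  unfold hDual
  unfold okCond at h
  push_neg at h
  split_ifs with h1 h2
  · exact absurd h1 (not_lt.2 h.1)
  · exact absurd h2.2 (h.2 h2.1)
  · rfl

lemma sum_mul_single {n : ℕ} (c : Fin n → ℝ) (i0 : Fin n) (s : ℝ) :
    ∑ i, c i * (Pi.single i0 s : Fin n → ℝ) i = c i0 * s := by
  rw [Finset.sum_eq_single i0]
  · rw [Pi.single_eq_same]
  · intro i _ hne
    rw [Pi.single_eq_of_ne hne, mul_zero]
  · intro h
    exact absurd (Finset.mem_univ i0) h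

variable {l k : ℕ} (δ e α b : Fin l → ℝ) (ζ : Fin k → ℝ) (c c₀ : ℝ)

/-- The dual objective. -/
noncomputable def Dval (ν : ℝ) : EReal :=
  ((c * ν + c₀ : ℝ) : EReal) + (∑ i, hDual (α i) (δ i) (b i) (e i) ν) + gDual ζ ν

lemma lag_eq (ν : ℝ) (x y : Fin l → ℝ) (z : Fin k → ℝ) :
    socpObj δ e ζ c₀ x y z + ν * (socpConLhs α b x y z + c) =
      ν*c + c₀ + (∑ i, ((δ i + ν*α i) * y i + (e i + ν*b i) * x i))
        + ∑ j, (ζ j + ν) * z j := by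
  have h1 : ∑ i, ((δ i + ν*α i) * y i + (e i + ν*b i) * x i)
      = (∑ i, (δ i * y i + e i * x i)) + ν * ∑ i, (α i * y i + b i * x i) := by
    rw [Finset.mul_sum, ← Finset.sum_add_distrib]
    exact Finset.sum_congr rfl fun i _ => by ring
  have h2 : ∑ j, (ζ j + ν) * z j = (∑ j, ζ j * z j) + ν * ∑ j, z j := by
    rw [Finset.mul_sum, ← Finset.sum_add_distrib]
    exact Finset.sum_congr rfl fun j _ => by ring
  rw [h1, h2]
  unfold socpObj socpConLhs
  ring

lemma Dval_eq_coe {ν : ℝ} (hok : ∀ i, okCond (α i) (δ i) (b i) (e i) ν)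
    (hz : ∀ j, ζ j + ν = 0) :
    Dval δ e α b ζ c c₀ ν
      = ((c * ν + c₀ + ∑ i, Hre (α i) (δ i) (b i) (e i) ν : ℝ) : EReal) := by
  unfold Dval
  rw [Finset.sum_congr rfl (fun i _ => hDual_eq_coe (hok i)), ← ereal_coe_sum,
    gDual, if_pos hz, add_zero, ← EReal.coe_add]

lemma Dval_bot {ν : ℝ} (h : ¬ ((∀ i, okCond (α i) (δ i) (b i) (e i) ν) ∧ ∀ j, ζ j + ν = 0)) :
    Dval δ e α b ζ c c₀ ν = ⊥ := by
  unfold Dval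
  rcases not_and_or.1 h with h | h
  · push_neg at h
    obtain ⟨i0, hi0⟩ := h
    have hsum : (∑ i, hDual (α i) (δ i) (b i) (e i) ν) = ⊥ := by
      rw [← Finset.add_sum_erase _ _ (Finset.mem_univ i0), hDual_bot hi0, EReal.bot_add]
    rw [hsum, EReal.add_bot, EReal.bot_add]
  · rw [gDual, if_neg h, EReal.add_bot]

lemma Dval_le_lagrange (ν : ℝ) (x y : Fin l → ℝ) (z : Fin k → ℝ)
    (hxy : ∀ i, 1/2 * x i ^ 2 ≤ y i) :
    Dval δ e α b ζ c c₀ ν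
      ≤ ((socpObj δ e ζ c₀ x y z + ν * (socpConLhs α b x y z + c) : ℝ) : EReal) := by
  by_cases hall : (∀ i, okCond (α i) (δ i) (b i) (e i) ν) ∧ ∀ j, ζ j + ν = 0
  · obtain ⟨hok, hz⟩ := hall
    rw [Dval_eq_coe δ e α b ζ c c₀ hok hz, EReal.coe_le_coe_iff, lag_eq]
    have hzz : ∑ j, (ζ j + ν) * z j = 0 :=
      Finset.sum_eq_zero fun j _ => by rw [hz j, zero_mul]
    have hs := Finset.sum_le_sum (fun i (_ : i ∈ Finset.univ) => Hre_le (hok i) (hxy i))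
    rw [hzz]
    have : c * ν = ν * c := mul_comm c ν
    linarith
  · rw [Dval_bot δ e α b ζ c c₀ hall]
    exact bot_le

lemma lagrange_lb (ν r : ℝ)
    (hlb : ∀ (x y : Fin l → ℝ) (z : Fin k → ℝ), (∀ i, 1/2 * x i ^ 2 ≤ y i) →
      r ≤ socpObj δ e ζ c₀ x y z + ν * (socpConLhs α b x y z + c)) :
    ((r : ℝ) : EReal) ≤ Dval δ e α b ζ c c₀ ν := by
  have hlb' : ∀ (x y : Fin l → ℝ) (z : Fin k → ℝ), (∀ i, 1/2 * x i ^ 2 ≤ y i) →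
      r ≤ ν*c + c₀ + (∑ i, ((δ i + ν*α i) * y i + (e i + ν*b i) * x i))
        + ∑ j, (ζ j + ν) * z j := by
    intro x y z hc
    rw [← lag_eq]
    exact hlb x y z hc
  have h0 : r ≤ ν*c + c₀ := by
    have := hlb' (fun _ => 0) (fun _ => 0) (fun _ => 0) (fun i => by norm_num)
    simpa using this
  have hok : ∀ i, okCond (α i) (δ i) (b i) (e i) ν := by
    intro i0
    by_contra hno
    unfold okCond at hno
    push_neg at hno
    obtain ⟨ha, hb2⟩ := hno
    rcases lt_or_eq_of_le ha with ha' | ha'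
    · set s := (r - ν*c - c₀ - 1)/(ν*α i0 + δ i0) with hs
      have hs0 : 0 ≤ s := by
        exact div_nonneg_of_nonpos (by linarith) ha
      have hcone : ∀ i, 1/2 * ((fun (_ : Fin l) => (0:ℝ)) i) ^ 2
          ≤ (Pi.single i0 s : Fin l → ℝ) i := by
        intro i
        rcases eq_or_ne i i0 with rfl | hne
        · simpa [Pi.single_eq_same] using hs0
        · simp [Pi.single_eq_of_ne hne]
      have h := hlb' (fun _ => 0) (Pi.single i0 s) (fun _ => 0) hcone
      simp only [mul_zero, add_zero, Finset.sum_const_zero] at h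
      rw [sum_mul_single (fun i => δ i + ν*α i) i0 s] at h
      have hcan : (δ i0 + ν*α i0) * s = r - ν*c - c₀ - 1 := by
        rw [hs, add_comm (δ i0), mul_comm]
        exact div_mul_cancel₀ _ (ne_of_lt ha')
      rw [hcan] at h
      linarith
    · have hp : e i0 + ν*b i0 ≠ 0 := hb2 ha'
      set s := (r - ν*c - c₀ - 1)/(e i0 + ν*b i0) with hs
      have hcone : ∀ i, 1/2 * ((Pi.single i0 s : Fin l → ℝ) i) ^ 2
          ≤ (Pi.single i0 (1/2*s^2) : Fin l → ℝ) i := by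
        intro i
        rcases eq_or_ne i i0 with rfl | hne
        · simp [Pi.single_eq_same]
        · simp [Pi.single_eq_of_ne hne]
      have h := hlb' (Pi.single i0 s) (Pi.single i0 (1/2*s^2)) (fun _ => 0) hcone
      have hsum : ∑ i, ((δ i + ν*α i) * (Pi.single i0 (1/2*s^2) : Fin l → ℝ) i
          + (e i + ν*b i) * (Pi.single i0 s : Fin l → ℝ) i)
          = (δ i0 + ν*α i0) * (1/2*s^2) + (e i0 + ν*b i0) * s := by
        rw [Finset.sum_add_distrib, sum_mul_single _ i0 (1/2*s^2), sum_mul_single _ i0 s]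
      simp only [mul_zero, Finset.sum_const_zero] at h
      rw [hsum] at h
      have ha0 : δ i0 + ν*α i0 = 0 := by linarith [ha']
      have hcan : (e i0 + ν*b i0) * s = r - ν*c - c₀ - 1 := by
        rw [hs, mul_comm]
        exact div_mul_cancel₀ _ hp
      rw [ha0, hcan] at h
      linarith
  have hz : ∀ j, ζ j + ν = 0 := by
    intro j0
    by_contra hq
    set s := (r - ν*c - c₀ - 1)/(ζ j0 + ν) with hs
    have h := hlb' (fun _ => 0) (fun _ => 0) (Pi.single j0 s) (fun i => by norm_num)
    simp only [mul_zero, add_zero, zero_add, Finset.sum_const_zero] at h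
    rw [sum_mul_single (fun j => ζ j + ν) j0 s] at h
    have hcan : (ζ j0 + ν) * s = r - ν*c - c₀ - 1 := by
      rw [hs, mul_comm]; exact div_mul_cancel₀ _ hq
    rw [hcan] at h
    linarith
  choose xm ym hcone hval using fun i => Hre_min (hok i)
  have h := hlb' xm ym (fun _ => 0) hcone
  simp only [mul_zero, Finset.sum_const_zero, add_zero] at h
  rw [Finset.sum_congr rfl (fun i _ => hval i)] at h
  rw [Dval_eq_coe δ e α b ζ c c₀ hok hz, EReal.coe_le_coe_iff]
  have : c * ν = ν * c := mul_comm c ν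
  linarith

/-- The convex "achievable" region of (constraint value, objective upper bound) pairs. -/
def Gset : Set (ℝ × ℝ) :=
  {p | ∃ (x y : Fin l → ℝ) (z : Fin k → ℝ), (∀ i, 1/2 * x i ^ 2 ≤ y i) ∧
    socpConLhs α b x y z = p.1 ∧ socpObj δ e ζ c₀ x y z ≤ p.2}

lemma con_comb (a a' : ℝ) (x y x' y' : Fin l → ℝ) (z z' : Fin k → ℝ) :
    socpConLhs α b (fun i => a*x i + a'*x' i) (fun i => a*y i + a'*y' i)
        (fun j => a*z j + a'*z' j)
      = a * socpConLhs α b x y z + a' * socpConLhs α b x' y' z' := by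
  unfold socpConLhs
  have h1 : ∑ i, (α i * (a*y i + a'*y' i) + b i * (a*x i + a'*x' i))
      = a * (∑ i, (α i * y i + b i * x i)) + a' * ∑ i, (α i * y' i + b i * x' i) := by
    rw [Finset.mul_sum, Finset.mul_sum, ← Finset.sum_add_distrib]
    exact Finset.sum_congr rfl fun i _ => by ring
  have h2 : ∑ j, (a * z j + a' * z' j) = a * (∑ j, z j) + a' * ∑ j, z' j := by
    rw [Finset.mul_sum, Finset.mul_sum, ← Finset.sum_add_distrib]
  rw [h1, h2]; ring

lemma obj_comb (a a' : ℝ) (x y x' y' : Fin l → ℝ) (z z' : Fin k → ℝ) (hab : a + a' = 1) :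
    socpObj δ e ζ c₀ (fun i => a*x i + a'*x' i) (fun i => a*y i + a'*y' i)
        (fun j => a*z j + a'*z' j)
      = a * socpObj δ e ζ c₀ x y z + a' * socpObj δ e ζ c₀ x' y' z' := by
  unfold socpObj
  have h1 : ∑ i, (δ i * (a*y i + a'*y' i) + e i * (a*x i + a'*x' i))
      = a * (∑ i, (δ i * y i + e i * x i)) + a' * ∑ i, (δ i * y' i + e i * x' i) := by
    rw [Finset.mul_sum, Finset.mul_sum, ← Finset.sum_add_distrib]
    exact Finset.sum_congr rfl fun i _ => by ring
  have h2 : ∑ j, ζ j * (a * z j + a' * z' j)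
      = a * (∑ j, ζ j * z j) + a' * ∑ j, ζ j * z' j := by
    rw [Finset.mul_sum, Finset.mul_sum, ← Finset.sum_add_distrib]
    exact Finset.sum_congr rfl fun j _ => by ring
  rw [h1, h2]
  have ha' : a' = 1 - a := by linarith
  rw [ha']; ring

lemma Gconv : Convex ℝ (Gset δ e α b ζ c₀) := by
  rintro p ⟨x, y, z, hc, hcon, hobj⟩ q ⟨x', y', z', hc', hcon', hobj'⟩ a a' ha ha' hab
  refine ⟨fun i => a*x i + a'*x' i, fun i => a*y i + a'*y' i, fun j => a*z j + a'*z' j,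
    ?_, ?_, ?_⟩
  · intro i
    nlinarith [sq_nonneg (x i - x' i), mul_nonneg ha ha',
      mul_le_mul_of_nonneg_left (hc i) ha, mul_le_mul_of_nonneg_left (hc' i) ha']
  · rw [con_comb, hcon, hcon']
    simp [Prod.smul_def, smul_eq_mul]
  · rw [obj_comb δ e ζ c₀ a a' x y x' y' z z' hab]
    have : (a • p + a' • q).2 = a * p.2 + a' * q.2 := by
      simp [Prod.smul_def, smul_eq_mul]
    rw [this]
    exact add_le_add (mul_le_mul_of_nonneg_left hobj ha)
      (mul_le_mul_of_nonneg_left hobj' ha')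

set_option maxHeartbeats 1000000 in
lemma exists_mult (r : ℝ)
    (hneg : ∃ (x : Fin l → ℝ) (z : Fin k → ℝ),
      (∑ i, ((1/2) * α i * x i ^ 2 + b i * x i)) + (∑ j, z j) + c < 0)
    (hpos : ∃ (x : Fin l → ℝ) (z : Fin k → ℝ),
      0 < (∑ i, ((1/2) * α i * x i ^ 2 + b i * x i)) + (∑ j, z j) + c)
    (hnotG : ((-c, r) : ℝ × ℝ) ∉ Gset δ e α b ζ c₀) :
    ∃ ν : ℝ, ∀ (x y : Fin l → ℝ) (z : Fin k → ℝ), (∀ i, 1/2 * x i ^ 2 ≤ y i) →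
      r ≤ socpObj δ e ζ c₀ x y z + ν * (socpConLhs α b x y z + c) := by
  classical
  obtain ⟨xm, zm, hn⟩ := hneg
  obtain ⟨xp, zp, hp⟩ := hpos
  set G := Gset δ e α b ζ c₀ with hGdef
  set tm := socpConLhs α b xm (fun i => 1/2*(xm i)^2) zm with htmdef
  set vm := socpObj δ e ζ c₀ xm (fun i => 1/2*(xm i)^2) zm with hvmdef
  set tp := socpConLhs α b xp (fun i => 1/2*(xp i)^2) zp with htpdef
  set vp := socpObj δ e ζ c₀ xp (fun i => 1/2*(xp i)^2) zp with hvpdef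
  have hPm : ((tm, vm) : ℝ × ℝ) ∈ G :=
    ⟨xm, fun i => 1/2*(xm i)^2, zm, fun i => le_refl _, rfl, le_refl _⟩
  have hPp : ((tp, vp) : ℝ × ℝ) ∈ G :=
    ⟨xp, fun i => 1/2*(xp i)^2, zp, fun i => le_refl _, rfl, le_refl _⟩
  have htmc : tm + c < 0 := by
    have : tm = (∑ i, ((1/2) * α i * xm i ^ 2 + b i * xm i)) + ∑ j, zm j := by
      rw [htmdef]
      unfold socpConLhs
      rw [Finset.sum_congr rfl (fun i (_ : i ∈ Finset.univ) =>
        (by ring : α i * (1/2*(xm i)^2) + b i * xm i = (1/2) * α i * xm i ^ 2 + b i * xm i))]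
    linarith [this ▸ hn]
  have htpc : 0 < tp + c := by
    have : tp = (∑ i, ((1/2) * α i * xp i ^ 2 + b i * xp i)) + ∑ j, zp j := by
      rw [htpdef]
      unfold socpConLhs
      rw [Finset.sum_congr rfl (fun i (_ : i ∈ Finset.univ) =>
        (by ring : α i * (1/2*(xp i)^2) + b i * xp i = (1/2) * α i * xp i ^ 2 + b i * xp i))]
    linarith [this ▸ hp]
  have htlt : tm < tp := by linarith
  set V := max vm vp + 1 with hVdef
  set W : ℝ × ℝ := ((tm + tp)/2, V) with hWdef
  set ε := min 1 ((tp - tm)/2) with hεdef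
  have hε : 0 < ε := lt_min one_pos (by linarith)
  have hW1 : W.1 = (tm + tp)/2 := rfl
  have hW2 : W.2 = V := rfl
  clear_value tm vm tp vp V W ε
  have hball : Metric.ball W ε ⊆ G := by
    intro p hp2
    rw [Metric.mem_ball, Prod.dist_eq, max_lt_iff, Real.dist_eq, Real.dist_eq] at hp2
    obtain ⟨hd1, hd2⟩ := hp2
    have hε1 : ε ≤ 1 := by rw [hεdef]; exact min_le_left _ _
    have hε2 : ε ≤ (tp - tm)/2 := by rw [hεdef]; exact min_le_right _ _
    rw [abs_lt] at hd1 hd2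
    have hp1lt : tm < p.1 ∧ p.1 < tp := by
      constructor
      · linarith [hd1.1, hε2, hW1]
      · linarith [hd1.2, hε2, hW1]
    set lam := (tp - p.1)/(tp - tm) with hlamdef
    have hne : tp - tm ≠ 0 := by linarith
    have hl0 : 0 ≤ lam := div_nonneg (by linarith [hp1lt.2]) (by linarith)
    have hl1 : lam ≤ 1 := by
      rw [hlamdef, div_le_one (by linarith)]
      linarith [hp1lt.1]
    have hcomb := Gconv δ e α b ζ c₀ hPm hPp hl0 (by linarith : (0:ℝ) ≤ 1 - lam)
      (by ring : lam + (1 - lam) = 1)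
    have hpt : lam • ((tm, vm) : ℝ × ℝ) + (1 - lam) • ((tp, vp) : ℝ × ℝ)
        = (p.1, lam * vm + (1 - lam) * vp) := by
      have hc1 : lam * tm + (1 - lam) * tp = p.1 := by
        rw [hlamdef]; field_simp; ring
      refine Prod.ext ?_ ?_ <;> simp [Prod.smul_def, smul_eq_mul, hc1]
    rw [hpt] at hcomb
    obtain ⟨x, y, z, hcs, hcon, hobj⟩ := hcomb
    have hcon' : socpConLhs α b x y z = p.1 := hcon
    have hobj' : socpObj δ e ζ c₀ x y z ≤ lam * vm + (1 - lam) * vp := hobj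
    refine ⟨x, y, z, hcs, hcon', hobj'.trans ?_⟩
    have hm1 : vm ≤ max vm vp := le_max_left _ _
    have hm2 : vp ≤ max vm vp := le_max_right _ _
    have hcombo : lam * vm + (1 - lam) * vp ≤ max vm vp := by nlinarith
    linarith [hd2.1, hε1, hW2, hVdef]
  have hW : W ∈ interior G :=
    mem_interior.2 ⟨Metric.ball W ε, hball, Metric.isOpen_ball, Metric.mem_ball_self hε⟩
  have hGc : Convex ℝ G := Gconv δ e α b ζ c₀
  have hni : ((-c, r) : ℝ × ℝ) ∉ interior G := fun h => hnotG (interior_subset h)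
  obtain ⟨f, hf⟩ := geometric_hahn_banach_open_point hGc.interior isOpen_interior hni
  have hfG : ∀ p ∈ G, f p ≤ f (-c, r) := by
    intro p hpG
    have key : ∀ θ : ℝ, θ ∈ Set.Ioo (0:ℝ) 1 →
        θ * f W + (1 - θ) * f p < f (-c, r) := by
      intro θ hθ
      have hmem := hGc.combo_interior_self_mem_interior hW hpG hθ.1
        (by linarith [hθ.2] : (0:ℝ) ≤ 1 - θ) (by ring)
      have := hf _ hmem
      simpa [map_add, map_smul, smul_eq_mul] using this
    by_contra hlt
    push_neg at hlt
    have hten : Filter.Tendsto (fun θ : ℝ => θ * f W + (1 - θ) * f p)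
        (nhdsWithin 0 (Set.Ioi (0:ℝ))) (nhds (f p)) := by
      have hcont : Continuous fun θ : ℝ => θ * f W + (1 - θ) * f p :=
        (continuous_id.mul continuous_const).add
          ((continuous_const.sub continuous_id).mul continuous_const)
      have h0 := hcont.tendsto 0
      simp only [zero_mul, sub_zero, one_mul, zero_add] at h0
      exact h0.mono_left nhdsWithin_le_nhds
    have hev : ∀ᶠ θ in nhdsWithin 0 (Set.Ioi (0:ℝ)),
        θ * f W + (1 - θ) * f p ≤ f (-c, r) := by
      filter_upwards [Ioo_mem_nhdsGT_of_mem (Set.mem_Ico.2 ⟨le_refl (0:ℝ), one_pos⟩)]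
        with θ hθ
      exact (key θ hθ).le
    exact absurd (le_of_tendsto hten hev) (not_le.2 hlt)
  set νt := f (1, 0) with hνtdef
  set μ := f (0, 1) with hμdef
  have hfval : ∀ p : ℝ × ℝ, f p = p.1 * νt + p.2 * μ := by
    intro p
    have hdec : (p : ℝ × ℝ) = p.1 • ((1, 0) : ℝ × ℝ) + p.2 • ((0, 1) : ℝ × ℝ) := by
      refine Prod.ext ?_ ?_ <;> simp
    conv_lhs => rw [hdec]
    rw [map_add, map_smul, map_smul, smul_eq_mul, smul_eq_mul]
  have hμ : μ ≤ 0 := by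
    by_contra hμpos
    push_neg at hμpos
    have hWG : W ∈ G := interior_subset hW
    set n := (f (-c, r) - f W + 1)/μ with hndef
    have hfW : f W ≤ f (-c, r) := hfG W hWG
    have hn0 : 0 ≤ n := div_nonneg (by linarith) hμpos.le
    obtain ⟨x, y, z, hcs, hcon, hobj⟩ := hWG
    have hWn : ((W.1, V + n) : ℝ × ℝ) ∈ G :=
      ⟨x, y, z, hcs, hcon, hobj.trans (by rw [hW2]; show V ≤ V + n; linarith)⟩
    have hle := hfG _ hWn
    rw [hfval, hfval] at hle
    simp only [Prod.fst, Prod.snd] at hle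
    have hWval : f W = W.1 * νt + W.2 * μ := hfval W
    have hcan : n * μ = f (-c, r) - f W + 1 := by
      rw [hndef]; exact div_mul_cancel₀ _ (ne_of_gt hμpos)
    have hfr : f (-c, r) = -c * νt + r * μ := by
      have := hfval (-c, r); simpa using this
    nlinarith [hle, hcan, hWval, hfr, hW2]
  by_cases hμ0 : μ = 0
  · exfalso
    have h1 := hfG _ hPm
    have h2 := hfG _ hPp
    rw [hfval, hfval] at h1
    rw [hfval, hfval] at h2
    simp only [hμ0, mul_zero, add_zero] at h1 h2
    have hν0 : νt = 0 := by nlinarith [h1, h2, htmc, htpc]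
    have := hf W hW
    rw [hfval, hfval] at this
    simp [hμ0, hν0] at this
  · have hμneg : μ < 0 := lt_of_le_of_ne hμ hμ0
    refine ⟨νt / μ, ?_⟩
    intro x y z hcs
    have hmem : ((socpConLhs α b x y z, socpObj δ e ζ c₀ x y z) : ℝ × ℝ) ∈ G :=
      ⟨x, y, z, hcs, rfl, le_refl _⟩
    have h := hfG _ hmem
    rw [hfval, hfval] at h
    have hcan : νt / μ * μ = νt := div_mul_cancel₀ _ hμ0
    rw [← hcan] at h
    by_contra hcon2
    push_neg at hcon2
    nlinarith [h, mul_neg_of_neg_of_pos hμneg (by linarith :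
      (0:ℝ) < r - (socpObj δ e ζ c₀ x y z + νt / μ * (socpConLhs α b x y z + c)))]

end Aux

/-- Theorem 3.4 of Jiang–Li–Wu: under the two-side Slater condition and `A ≠ 0`, strong
duality holds between (EP₁) and its Lagrangian dual with a free multiplier `ν ∈ ℝ`. -/
theorem stmt_15 (l k : ℕ) (δ e α b : Fin l → ℝ) (ζ : Fin k → ℝ) (c c₀ : ℝ)
    (hneg : ∃ (x : Fin l → ℝ) (z : Fin k → ℝ),
      (∑ i, ((1/2) * α i * x i ^ 2 + b i * x i)) + (∑ j, z j) + c < 0)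
    (hpos : ∃ (x : Fin l → ℝ) (z : Fin k → ℝ),
      0 < (∑ i, ((1/2) * α i * x i ^ 2 + b i * x i)) + (∑ j, z j) + c)
    (hAne : 1 ≤ k ∨ ∃ i, α i ≠ 0) :
    socpValEq δ e α b ζ c c₀ =
      sSup {v : EReal | ∃ ν : ℝ,
        v = ((c * ν + c₀ : ℝ) : EReal) +
          (∑ i, hDual (α i) (δ i) (b i) (e i) ν) + gDual ζ ν} := by
  refine le_antisymm ?_ ?_
  · by_contra hlt
    push_neg at hlt
    obtain ⟨q, hq1, hq2⟩ := EReal.exists_rat_btwn_of_lt hlt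
    have hnotG : ((-c, (q:ℝ)) : ℝ × ℝ) ∉ Gset δ e α b ζ c₀ := by
      rintro ⟨x, y, z, hcs, hcon, hobj⟩
      have hfeas : socpConLhs α b x y z + c = 0 := by
        have hcon' : socpConLhs α b x y z = -c := hcon
        rw [hcon']; ring
      have h1 : socpValEq δ e α b ζ c c₀ ≤ ((socpObj δ e ζ c₀ x y z : ℝ) : EReal) :=
        sInf_le ⟨x, y, z, hfeas, hcs, rfl⟩
      have h2 : ((socpObj δ e ζ c₀ x y z : ℝ) : EReal) ≤ (((q:ℝ) : ℝ) : EReal) :=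
        EReal.coe_le_coe_iff.2 hobj
      exact absurd (h1.trans h2) (not_le.2 hq2)
    obtain ⟨ν, hν⟩ := exists_mult δ e α b ζ c c₀ (q:ℝ) hneg hpos hnotG
    have hD := lagrange_lb δ e α b ζ c c₀ ν (q:ℝ) hν
    have hle : Dval δ e α b ζ c c₀ ν ≤ sSup {v : EReal | ∃ ν : ℝ,
        v = ((c * ν + c₀ : ℝ) : EReal) +
          (∑ i, hDual (α i) (δ i) (b i) (e i) ν) + gDual ζ ν} :=
      le_sSup ⟨ν, rfl⟩
    exact absurd (hD.trans hle) (not_le.2 hq1)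
  · refine sSup_le ?_
    rintro v ⟨ν, rfl⟩
    refine le_sInf ?_
    rintro w ⟨x, y, z, hcon, hcs, rfl⟩
    have h := Dval_le_lagrange δ e α b ζ c c₀ ν x y z hcs
    rw [hcon, mul_zero, add_zero] at h
    exact h
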